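/- arXiv:2412.01055 — 3 statements merged into one kernel-verified Lean document; each statement's English description precedes it below -/
import Mathlib

section
/- Let Φ be an M×N real matrix satisfying the bounded restricted isometry property of order s with constant δ_s^b, i.e., (1-δ_s^b)‖x‖₂² ≤ ‖Φx‖₂² ≤ (1+δ_s^b)‖x‖₂² for all s-sparse vectors x with ‖x‖_∞ ≤ 1. If x and z are vectors with disjoint supports, |supp(x)| + |supp(z)| ≤ s, ‖x‖_∞ ≤ 1, and ‖z‖_∞ ≤ 1, then |⟨Φx, Φz⟩| ≤ δ_s^b ‖x‖₂ ‖z‖₂. -/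
/-!
Normalize `x` and `z` to unit vectors `a` and `b`. They are orthogonal, so `‖a ± b‖² = 2`, and
`a ± b` is again supported in `supp x ∪ supp z`, with entries bounded by 1 because the supports
are disjoint and no coordinate of a unit vector exceeds 1. The BRIP at `a ± b` and polarization,
`4 ⟪Φa, Φb⟫ = ‖Φ(a + b)‖² - ‖Φ(a - b)‖²`, give `|⟪Φa, Φb⟫| ≤ δ`; rescaling gives the claim.
-/

open Function

noncomputable def l2 {n : ℕ} (x : Fin n → ℝ) : ℝ := Real.sqrt (∑ i, (x i) ^ 2)

section InnerProductSpace

variable {E F : Type*} [NormedAddCommGroup E] [InnerProductSpace ℝ E]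
  [NormedAddCommGroup F] [InnerProductSpace ℝ F]

def NearIsometricAt (T : E →ₗ[ℝ] F) (δ : ℝ) (v : E) : Prop :=
  (1 - δ) * ‖v‖ ^ 2 ≤ ‖T v‖ ^ 2 ∧ ‖T v‖ ^ 2 ≤ (1 + δ) * ‖v‖ ^ 2

theorem abs_inner_map_le_of_orthonormal (T : E →ₗ[ℝ] F) {δ : ℝ} {a b : E}
    (ha : ‖a‖ = 1) (hb : ‖b‖ = 1) (hab : inner ℝ a b = 0)
    (hplus : NearIsometricAt T δ (a + b)) (hminus : NearIsometricAt T δ (a - b)) :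
    |inner ℝ (T a) (T b)| ≤ δ := by
  have hplus_sq : ‖a + b‖ ^ 2 = 2 := by rw [norm_add_sq_real, ha, hb, hab]; norm_num
  have hminus_sq : ‖a - b‖ ^ 2 = 2 := by rw [norm_sub_sq_real, ha, hb, hab]; norm_num
  have polarization : ‖T (a + b)‖ ^ 2 - ‖T (a - b)‖ ^ 2 = 4 * inner ℝ (T a) (T b) := by
    rw [map_add, map_sub, norm_add_sq_real, norm_sub_sq_real]; ring
  obtain ⟨hplus_lo, hplus_hi⟩ := hplus
  obtain ⟨hminus_lo, hminus_hi⟩ := hminus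
  rw [hplus_sq] at hplus_lo hplus_hi
  rw [hminus_sq] at hminus_lo hminus_hi
  rw [abs_le]
  constructor <;> linarith

theorem abs_inner_map_le_of_inner_eq_zero (T : E →ₗ[ℝ] F) {δ : ℝ} {x z : E}
    (hxz : inner ℝ x z = 0)
    (hT : ∀ c : ℝ, |c| = 1 → NearIsometricAt T δ (‖x‖⁻¹ • x + c • ‖z‖⁻¹ • z)) :
    |inner ℝ (T x) (T z)| ≤ δ * ‖x‖ * ‖z‖ := by
  rcases eq_or_ne x 0 with rfl | hx
  · simp
  rcases eq_or_ne z 0 with rfl | hz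
  · simp
  have hxn : 0 < ‖x‖ := norm_pos_iff.mpr hx
  have hzn : 0 < ‖z‖ := norm_pos_iff.mpr hz
  have hunit := abs_inner_map_le_of_orthonormal T (a := ‖x‖⁻¹ • x) (b := ‖z‖⁻¹ • z)
    (norm_smul_inv_norm hx) (norm_smul_inv_norm hz)
    (by rw [inner_smul_left, inner_smul_right, hxz]; simp)
    (by simpa using hT 1 (by simp)) (by simpa [sub_eq_add_neg] using hT (-1) (by simp))
  rw [map_smul, map_smul, inner_smul_left, inner_smul_right, abs_mul, abs_mul] at hunit
  simp only [conj_trivial, abs_inv, abs_norm] at hunit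
  rw [inv_mul_le_iff₀ hxn, inv_mul_le_iff₀ hzn] at hunit
  linarith

end InnerProductSpace

section Support

variable {ι : Type*}

theorem sum_mul_eq_zero_of_disjoint_support [Fintype ι] {x z : ι → ℝ}
    (hdisj : Disjoint (support x) (support z)) : ∑ i, x i * z i = 0 := by
  have : (fun i ↦ x i * z i) = 0 := by
    rw [← support_eq_empty_iff, support_mul, hdisj.inter_eq]
  simp [this]

theorem ncard_support_smul_add_smul_le [Finite ι] (x z : ι → ℝ) (a b : ℝ) :
    (support (a • x + b • z)).ncard ≤ (support x).ncard + (support z).ncard :=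
  calc (support (a • x + b • z)).ncard
      ≤ (support x ∪ support z).ncard :=
        Set.ncard_le_ncard ((support_add _ _).trans
          (Set.union_subset_union (support_smul_subset_right _ _)
            (support_smul_subset_right _ _))) (Set.toFinite _)
    _ ≤ _ := Set.ncard_union_le _ _

theorem abs_add_apply_le_of_disjoint_support {x z : ι → ℝ} {C : ℝ}
    (hdisj : Disjoint (support x) (support z)) (hx : ∀ i, |x i| ≤ C) (hz : ∀ i, |z i| ≤ C)
    (i : ι) : |x i + z i| ≤ C := by
  by_cases hxi : x i = 0
  · simpa [hxi] using hz i
  · have hzi : z i = 0 := notMem_support.mp (Set.disjoint_left.mp hdisj hxi)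
    simpa [hzi] using hx i

end Support

theorem l2_eq_norm {n : ℕ} (x : Fin n → ℝ) : l2 x = ‖WithLp.toLp 2 x‖ := by
  simp [l2, EuclideanSpace.norm_eq]

theorem abs_inv_l2_mul_apply_le_one {n : ℕ} (x : Fin n → ℝ) (i : Fin n) :
    |(l2 x)⁻¹ * x i| ≤ 1 := by
  have hle : |x i| ≤ l2 x := by
    simpa [l2_eq_norm] using PiLp.norm_apply_le (WithLp.toLp 2 x) i
  rw [abs_mul, abs_inv, abs_of_nonneg ((abs_nonneg _).trans hle), inv_mul_eq_div]
  exact div_le_one_of_le₀ hle ((abs_nonneg _).trans hle)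

theorem stmt0_general {M N s : ℕ} (Φ : Matrix (Fin M) (Fin N) ℝ) (δ : ℝ)
    (hBRIP : ∀ v : Fin N → ℝ, Set.ncard (Function.support v) ≤ s → (∀ i, |v i| ≤ 1) →
      (1 - δ) * (l2 v) ^ 2 ≤ (l2 (Φ.mulVec v)) ^ 2 ∧
      (l2 (Φ.mulVec v)) ^ 2 ≤ (1 + δ) * (l2 v) ^ 2)
    (x z : Fin N → ℝ)
    (hdisj : Disjoint (Function.support x) (Function.support z))
    (hcard : Set.ncard (Function.support x) + Set.ncard (Function.support z) ≤ s) :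
    |∑ i, Φ.mulVec x i * Φ.mulVec z i| ≤ δ * l2 x * l2 z := by
  have horth : inner ℝ (WithLp.toLp 2 x) (WithLp.toLp 2 z) = 0 := by
    simpa [PiLp.inner_apply, mul_comm] using sum_mul_eq_zero_of_disjoint_support hdisj
  have hnear : ∀ c : ℝ, |c| = 1 → NearIsometricAt (Matrix.toLpLin 2 2 Φ) δ
      (‖WithLp.toLp 2 x‖⁻¹ • WithLp.toLp 2 x + c • ‖WithLp.toLp 2 z‖⁻¹ • WithLp.toLp 2 z) := by
    intro c hc
    have hsupp := (ncard_support_smul_add_smul_le x z (l2 x)⁻¹ (c * (l2 z)⁻¹)).trans hcard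
    have hentries : ∀ i, |((l2 x)⁻¹ • x + (c * (l2 z)⁻¹) • z) i| ≤ 1 :=
      abs_add_apply_le_of_disjoint_support
        (hdisj.mono (support_smul_subset_right _ _) (support_smul_subset_right _ _))
        (abs_inv_l2_mul_apply_le_one x)
        (fun i ↦ by simpa [mul_assoc, abs_mul, hc] using abs_inv_l2_mul_apply_le_one z i)
    simpa [NearIsometricAt, l2_eq_norm, mul_smul, Matrix.mulVec_add, Matrix.mulVec_smul] using hBRIP _ hsupp hentries
  simpa [PiLp.inner_apply, l2_eq_norm, mul_comm] using
    abs_inner_map_le_of_inner_eq_zero (Matrix.toLpLin 2 2 Φ) horth hnear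

/-- If `Φ` satisfies the bounded restricted isometry property (BRIP) of
order `s` with constant `δ`, and `x, z` have disjoint supports with
`|supp x| + |supp z| ≤ s` and entries bounded by 1, then
`|⟨Φx, Φz⟩| ≤ δ ‖x‖₂ ‖z‖₂`. -/
theorem stmt0 {M N s : ℕ} (Φ : Matrix (Fin M) (Fin N) ℝ) (δ : ℝ)
    (hBRIP : ∀ v : Fin N → ℝ, Set.ncard (Function.support v) ≤ s → (∀ i, |v i| ≤ 1) →
      (1 - δ) * (l2 v) ^ 2 ≤ (l2 (Φ.mulVec v)) ^ 2 ∧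
      (l2 (Φ.mulVec v)) ^ 2 ≤ (1 + δ) * (l2 v) ^ 2)
    (x z : Fin N → ℝ)
    (hdisj : Disjoint (Function.support x) (Function.support z))
    (hcard : Set.ncard (Function.support x) + Set.ncard (Function.support z) ≤ s)
    (hx : ∀ i, |x i| ≤ 1) (hz : ∀ i, |z i| ≤ 1) :
    |∑ i, Φ.mulVec x i * Φ.mulVec z i| ≤ δ * l2 x * l2 z :=
  stmt0_general Φ δ hBRIP x z hdisj hcard
end

section
/- Let h ∈ ℝ^N, let J₀ be a set of s indices, and define J₁, J₂, J₃, … by successively taking the s indices of largest absolute value of h outside the previously chosen sets (so h = h_{J₀} + h_{J₁} + h_{J₂} + ⋯). If ‖h_{J₀^c}‖₁ ≤ ‖h_{J₀}‖₁, then ∑_{ℓ≥2} ‖h_{J_ℓ}‖₂ ≤ ‖h_{J₀}‖₂ ≤ ‖h_{J₀∪J₁}‖₂. -/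
lemma l2_restrict {n : ℕ} (h : Fin n → ℝ) (S : Finset (Fin n)) :
    l2 (fun i => if i ∈ S then h i else 0) = Real.sqrt (∑ i ∈ S, h i ^ 2) := by
  unfold l2
  congr 1
  rw [show (∑ i : Fin n, (if i ∈ S then h i else 0) ^ 2)
      = ∑ i : Fin n, (if i ∈ S then h i ^ 2 else 0) from
    Finset.sum_congr rfl (fun i _ => by split <;> simp),
    Finset.sum_ite_mem, Finset.univ_inter]

/-- If `J₀` has `s` indices and `J₁, J₂, …` are obtained by successively
taking the `s` indices of largest absolute value of `h` outside the previously chosen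
sets, and `‖h_{J₀ᶜ}‖₁ ≤ ‖h_{J₀}‖₁`, then
`∑_{ℓ≥2} ‖h_{J_ℓ}‖₂ ≤ ‖h_{J₀}‖₂ ≤ ‖h_{J₀∪J₁}‖₂`. -/
theorem stmt3 {N s : ℕ} (h : Fin N → ℝ) (J : ℕ → Finset (Fin N))
    (hdisj : ∀ k l, k ≠ l → Disjoint (J k) (J l))
    (hcover : ∀ i, ∃ k, i ∈ J k)
    (hcard0 : (J 0).card = s)
    (hcard : ∀ k, (J k).card ≤ s)
    (hfull : ∀ k, (J (k + 1)).Nonempty → (J k).card = s)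
    (horder : ∀ k, 1 ≤ k → ∀ i ∈ J (k + 1), ∀ i' ∈ J k, |h i| ≤ |h i'|)
    (hl1 : ∑ i ∈ (J 0)ᶜ, |h i| ≤ ∑ i ∈ J 0, |h i|) :
    (∑' k : ℕ, l2 (fun i => if i ∈ J (k + 2) then h i else 0)) ≤
        l2 (fun i => if i ∈ J 0 then h i else 0) ∧
      l2 (fun i => if i ∈ J 0 then h i else 0) ≤
        l2 (fun i => if i ∈ J 0 ∪ J 1 then h i else 0) := by
  constructor
  · -- main inequality
    simp only [l2_restrict]
    -- s = 0 case
    rcases Nat.eq_zero_or_pos s with hs0 | hs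
    · have hempty : ∀ k, J k = ∅ := fun k =>
        Finset.card_eq_zero.mp (le_antisymm (hs0 ▸ hcard k) (Nat.zero_le _))
      simp [hempty]
    -- s ≥ 1
    set L1 : ℕ → ℝ := fun k => ∑ i ∈ J k, |h i| with hL1
    have hL1nonneg : ∀ k, 0 ≤ L1 k := fun k =>
      Finset.sum_nonneg fun i _ => abs_nonneg _
    have hsR : (0:ℝ) < s := by exact_mod_cast hs
    have hsqrt : (0:ℝ) < Real.sqrt s := Real.sqrt_pos.mpr hsR
    -- all earlier blocks full when some block nonempty
    have hfull' : ∀ m, (J m).Nonempty → ∀ j ≤ m, j < m → (J j).card = s := by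
      intro m
      induction m with
      | zero => intro _ j _ hj; omega
      | succ m ih =>
        intro hm j _ hj
        have hJm : (J m).card = s := hfull m hm
        have hJmne : (J m).Nonempty := Finset.card_pos.mp (by omega)
        rcases Nat.lt_succ_iff_lt_or_eq.mp hj with hj' | rfl
        · exact ih hJmne j (le_of_lt hj') hj'
        · exact hJm
    -- vanishing for large k
    have hvanish : ∀ k, N < k → J k = ∅ := by
      intro k hk
      by_contra hne
      have hne' : (J k).Nonempty := Finset.nonempty_iff_ne_empty.mpr (by
        intro e; exact hne e)
      have hcards : ∀ j ∈ Finset.range k, (J j).card = s := fun j hj =>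
        hfull' k hne' j (le_of_lt (Finset.mem_range.mp hj)) (Finset.mem_range.mp hj)
      have hdisj' : ∀ j ∈ Finset.range k, ∀ l ∈ Finset.range k, j ≠ l →
          Disjoint (J j) (J l) := fun j _ l _ hjl => hdisj j l hjl
      have hcardU : ((Finset.range k).biUnion J).card = ∑ j ∈ Finset.range k, (J j).card :=
        Finset.card_biUnion hdisj'
      have hle : ((Finset.range k).biUnion J).card ≤ N := by
        simpa using Finset.card_le_univ ((Finset.range k).biUnion J)
      rw [hcardU, Finset.sum_congr rfl hcards, Finset.sum_const, Finset.card_range,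
        smul_eq_mul] at hle
      have : k ≤ k * s := Nat.le_mul_of_pos_right k hs
      omega
    -- per-term bound
    have hterm : ∀ k : ℕ, Real.sqrt (∑ i ∈ J (k+2), h i ^ 2) ≤ L1 (k+1) / Real.sqrt s := by
      intro k
      rcases Finset.eq_empty_or_nonempty (J (k+2)) with he | hne
      · rw [he, Finset.sum_empty, Real.sqrt_zero]
        positivity
      · have hcardk1 : (J (k+1)).card = s := hfull (k+1) hne
        have hptwise : ∀ i ∈ J (k+2), |h i| ≤ L1 (k+1) / s := by
          intro i hi
          rw [le_div_iff₀ hsR]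
          calc |h i| * s = ∑ _i' ∈ J (k+1), |h i| := by
                rw [Finset.sum_const, hcardk1, nsmul_eq_mul, mul_comm]
            _ ≤ ∑ i' ∈ J (k+1), |h i'| :=
                Finset.sum_le_sum fun i' hi' => horder (k+1) (by omega) i hi i' hi'
        have hsum : ∑ i ∈ J (k+2), h i ^ 2 ≤ s * (L1 (k+1) / s) ^ 2 := by
          calc ∑ i ∈ J (k+2), h i ^ 2 ≤ ∑ i ∈ J (k+2), (L1 (k+1) / s) ^ 2 := by
                refine Finset.sum_le_sum fun i hi => ?_
                rw [← sq_abs]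
                exact pow_le_pow_left₀ (abs_nonneg _) (hptwise i hi) 2
            _ = (J (k+2)).card * (L1 (k+1) / s) ^ 2 := by
                rw [Finset.sum_const, nsmul_eq_mul]
            _ ≤ s * (L1 (k+1) / s) ^ 2 :=
                mul_le_mul_of_nonneg_right (by exact_mod_cast hcard (k+2)) (by positivity)
        calc Real.sqrt (∑ i ∈ J (k+2), h i ^ 2) ≤ Real.sqrt (s * (L1 (k+1) / s) ^ 2) :=
              Real.sqrt_le_sqrt hsum
          _ = L1 (k+1) / Real.sqrt s := by
              have hss : Real.sqrt (s:ℝ) * Real.sqrt s = s := Real.mul_self_sqrt hsR.le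
              rw [Real.sqrt_mul hsR.le, Real.sqrt_sq (by positivity)]
              field_simp
              linear_combination L1 (k+1) * hss
    -- tsum is a finite sum
    have hzero : ∀ k ∉ Finset.range N, Real.sqrt (∑ i ∈ J (k+2), h i ^ 2) = 0 := by
      intro k hk
      rw [hvanish (k+2) (by simp at hk; omega)]
      simp
    rw [tsum_eq_sum hzero]
    -- sum of L1 over tail blocks ≤ L1 of complement
    have hunion : (Finset.range N).biUnion (fun k => J (k+1)) ⊆ (J 0)ᶜ := by
      intro i hi
      rw [Finset.mem_biUnion] at hi
      obtain ⟨k, _, hik⟩ := hi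
      rw [Finset.mem_compl]
      intro hi0
      exact Finset.disjoint_left.mp (hdisj (k+1) 0 (by omega)) hik hi0
    have hsumL1 : ∑ k ∈ Finset.range N, L1 (k+1) ≤ L1 0 := by
      have h1 : ∑ k ∈ Finset.range N, L1 (k+1)
          = ∑ i ∈ (Finset.range N).biUnion (fun k => J (k+1)), |h i| := by
        rw [Finset.sum_biUnion]
        intro j _ l _ hjl
        exact hdisj (j+1) (l+1) (by omega)
      rw [h1]
      calc ∑ i ∈ (Finset.range N).biUnion (fun k => J (k+1)), |h i|
          ≤ ∑ i ∈ (J 0)ᶜ, |h i| :=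
            Finset.sum_le_sum_of_subset_of_nonneg hunion fun i _ _ => abs_nonneg _
        _ ≤ L1 0 := hl1
    -- Cauchy-Schwarz: L1 0 ≤ √s * sqrt(∑ h²)
    have hCS : L1 0 ≤ Real.sqrt s * Real.sqrt (∑ i ∈ J 0, h i ^ 2) := by
      have h2 : (L1 0) ^ 2 ≤ s * ∑ i ∈ J 0, h i ^ 2 := by
        have := sq_sum_le_card_mul_sum_sq (s := J 0) (f := fun i => |h i|)
        simp only [sq_abs] at this
        rw [hcard0] at this
        exact this
      have := Real.sqrt_le_sqrt h2
      rwa [Real.sqrt_sq (hL1nonneg 0), Real.sqrt_mul (by positivity)] at this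
    calc ∑ k ∈ Finset.range N, Real.sqrt (∑ i ∈ J (k+2), h i ^ 2)
        ≤ ∑ k ∈ Finset.range N, L1 (k+1) / Real.sqrt s :=
          Finset.sum_le_sum fun k _ => hterm k
      _ = (∑ k ∈ Finset.range N, L1 (k+1)) / Real.sqrt s := by
          rw [Finset.sum_div]
      _ ≤ L1 0 / Real.sqrt s := by gcongr
      _ ≤ Real.sqrt s * Real.sqrt (∑ i ∈ J 0, h i ^ 2) / Real.sqrt s := by gcongr
      _ = Real.sqrt (∑ i ∈ J 0, h i ^ 2) := by
          field_simp
  · -- second inequality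
    simp only [l2_restrict]
    apply Real.sqrt_le_sqrt
    apply Finset.sum_le_sum_of_subset_of_nonneg
    · exact Finset.subset_union_left
    · intro i _ _; positivity
end

section
/- Fix real weights w₁, …, w_N and a target W, and consider the Bayesian network with a single Gaussian observation y = W of mean ∑_j w_j x_j and precision β, where x_j ∈ {0,1} have priors p(x_j) > 0. In the limit β → ∞, the MAP assignment argmax_{x ∈ {0,1}^N} [ -(β/2)(W - ∑_j w_j x_j)² + ∑_j ln p(x_j) ] is attained at a binary vector x satisfying ∑_j w_j x_j = W whenever such a vector exists; i.e., for all sufficiently large β, every maximizer satisfies ∑_j w_j x_j = W. -/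
/-- With a single Gaussian observation `y = W` of mean `∑_j w_j x_j` and
precision `β`, and strictly positive priors `p(x_j)`, if some binary vector satisfies
`∑_j w_j x_j = W`, then for all sufficiently large `β` every maximizer of the MAP
objective `-(β/2)(W - ∑_j w_j x_j)² + ∑_j ln p(x_j)` satisfies `∑_j w_j x_j = W`. -/
theorem stmt19 {N : ℕ} (w : Fin N → ℝ) (W : ℝ) (p : Fin N → Bool → ℝ)
    (hp : ∀ j b, 0 < p j b)
    (hex : ∃ x : Fin N → Bool, ∑ j, w j * (if x j then (1 : ℝ) else 0) = W) :
    ∃ β₀ : ℝ, ∀ β : ℝ, β₀ ≤ β → ∀ x : Fin N → Bool,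
      (∀ x' : Fin N → Bool,
        -(β / 2) * (W - ∑ j, w j * (if x' j then (1 : ℝ) else 0)) ^ 2
            + ∑ j, Real.log (p j (x' j))
          ≤ -(β / 2) * (W - ∑ j, w j * (if x j then (1 : ℝ) else 0)) ^ 2
            + ∑ j, Real.log (p j (x j))) →
      ∑ j, w j * (if x j then (1 : ℝ) else 0) = W := by
  obtain ⟨x₀, hx₀⟩ := hex
  set S : (Fin N → Bool) → ℝ := fun x => ∑ j, w j * (if x j then (1 : ℝ) else 0) with hS
  set L : (Fin N → Bool) → ℝ := fun x => ∑ j, Real.log (p j (x j)) with hL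
  by_cases hF : ∃ x : Fin N → Bool, S x ≠ W
  · obtain ⟨z, hz⟩ := hF
    set F : Finset (Fin N → Bool) := Finset.univ.filter (fun x => S x ≠ W) with hFdef
    have hFne : F.Nonempty := ⟨z, by simp [hFdef, hz]⟩
    set c : ℝ := F.inf' hFne (fun x => (W - S x) ^ 2) with hc
    have hcpos : 0 < c := by
      rw [hc]
      apply Finset.lt_inf'_iff hFne |>.2
      intro x hx
      have : S x ≠ W := by simpa [hFdef] using hx
      have : W - S x ≠ 0 := sub_ne_zero.2 (Ne.symm this)
      positivity
    have hcle : ∀ x : Fin N → Bool, S x ≠ W → c ≤ (W - S x) ^ 2 := by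
      intro x hx
      exact Finset.inf'_le _ (by simp [hFdef, hx])
    set M : ℝ := (Finset.univ : Finset (Fin N → Bool)).sup' ⟨x₀, Finset.mem_univ _⟩ L with hM
    refine ⟨2 * (M - L x₀) / c + 1, fun β hβ x hmax => ?_⟩
    by_contra hne
    have h1 := hmax x₀
    have hx₀S : S x₀ = W := hx₀
    have hLle : L x ≤ M := Finset.le_sup' L (Finset.mem_univ x)
    have hMnn : 0 ≤ M - L x₀ := sub_nonneg.2 (Finset.le_sup' L (Finset.mem_univ x₀))
    have hβpos : 0 < β := lt_of_lt_of_le (by positivity) hβ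
    -- from h1 : -(β/2)*0 + L x₀ ≤ -(β/2)*(W - S x)^2 + L x
    have key : (β / 2) * (W - S x) ^ 2 ≤ L x - L x₀ := by
      have : -(β / 2) * (W - S x₀) ^ 2 + L x₀ ≤ -(β / 2) * (W - S x) ^ 2 + L x := h1
      rw [hx₀S] at this
      simp at this
      linarith
    have hge : (β / 2) * c ≤ (β / 2) * (W - S x) ^ 2 :=
      mul_le_mul_of_nonneg_left (hcle x hne) (by linarith)
    have hbound : (β / 2) * c ≤ M - L x₀ := by linarith
    have : (2 * (M - L x₀) / c + 1) / 2 * c ≤ (β / 2) * c :=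
      mul_le_mul_of_nonneg_right (by linarith) (le_of_lt hcpos)
    have hexp : (2 * (M - L x₀) / c + 1) / 2 * c = (M - L x₀) + c / 2 := by
      field_simp
    rw [hexp] at this
    linarith
  · push_neg at hF
    exact ⟨0, fun β hβ x hmax => hF x⟩
end
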